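/- For every θ ∈ ℝ^q, the projected Bellman equation Π(R + γ·P·Φθ) − Φθ = 0 holds if and only if the linear equation Φᵀ D (γP − I) Φ θ = −Φᵀ D R holds. -/

import Mathlib

open Matrix

/-!
With `A = Φᵀ D`, the Gram matrix `A Φ` is positive definite because `D` is and `Φ` is injective,
so `Π = Φ (A Φ)⁻¹ A` is the projection onto the range of `Φ` along the kernel of `A`. Hence
`Π v = Φ θ` iff `A v = A Φ θ`, and with `v = R + γ P Φ θ` this is the stated linear equation.
-/

theorem Matrix.mulVec_injective_of_rank_eq_card {m n K : Type*} [Fintype n] [Field K]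
    {A : Matrix m n K} (hA : A.rank = Fintype.card n) : Function.Injective A.mulVec := by
  rw [mulVec_injective_iff, linearIndependent_iff_card_eq_finrank_span, ← hA,
    rank_eq_finrank_span_cols]
  rfl

theorem Matrix.isUnit_transpose_mul_diagonal_mul {m n : Type*} [Fintype m] [DecidableEq m]
    [Fintype n] [DecidableEq n] {d : m → ℝ} (hd : ∀ i, 0 < d i) {Φ : Matrix m n ℝ}
    (hΦ : Function.Injective Φ.mulVec) : IsUnit (Φᵀ * diagonal d * Φ) :=
  ((posDef_diagonal_iff.mpr hd).conjTranspose_mul_mul_same hΦ).isUnit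

theorem Matrix.mul_inv_mul_mulVec_eq_iff {m n R : Type*} [Fintype m] [Fintype n] [DecidableEq n]
    [CommRing R] {Φ : Matrix m n R} {A : Matrix n m R} (hAΦ : IsUnit (A * Φ))
    (v : m → R) (θ : n → R) :
    (Φ * (A * Φ)⁻¹ * A) *ᵥ v = Φ *ᵥ θ ↔ A *ᵥ v = (A * Φ) *ᵥ θ := by
  have hdet := (isUnit_iff_isUnit_det _).mp hAΦ
  constructor
  · intro h
    calc A *ᵥ v = (A * Φ * (A * Φ)⁻¹ * A) *ᵥ v := by rw [mul_nonsing_inv _ hdet, Matrix.one_mul]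
      _ = A *ᵥ ((Φ * (A * Φ)⁻¹ * A) *ᵥ v) := by simp only [mulVec_mulVec, Matrix.mul_assoc]
      _ = (A * Φ) *ᵥ θ := by rw [h, mulVec_mulVec]
  · intro h
    rw [← mulVec_mulVec, h, mulVec_mulVec, Matrix.mul_assoc, nonsing_inv_mul _ hdet, Matrix.mul_one]

theorem stmt_7_general {S : Type*} [Fintype S] [DecidableEq S]
    (q : ℕ)
    (P : Matrix S S ℝ) (γ : ℝ) (R : S → ℝ)
    (d : S → ℝ) (hd : ∀ s, 0 < d s)
    (Φ : Matrix S (Fin q) ℝ) (hΦ : Φ.rank = q)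
    (Proj : Matrix S S ℝ)
    (hProj : Proj = Φ * (Φᵀ * Matrix.diagonal d * Φ)⁻¹ * Φᵀ * Matrix.diagonal d) :
    ∀ θ : Fin q → ℝ,
      Proj *ᵥ (R + γ • (P *ᵥ (Φ *ᵥ θ))) - Φ *ᵥ θ = 0 ↔
      (Φᵀ * Matrix.diagonal d * (γ • P - 1) * Φ) *ᵥ θ =
        -((Φᵀ * Matrix.diagonal d) *ᵥ R) := by
  intro θ
  set A := Φᵀ * diagonal d
  have hGram : IsUnit (A * Φ) := isUnit_transpose_mul_diagonal_mul hd
    (mulVec_injective_of_rank_eq_card (by rw [hΦ, Fintype.card_fin]))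
  have hBellman : (A * (γ • P - 1) * Φ) *ᵥ θ = γ • (A *ᵥ (P *ᵥ (Φ *ᵥ θ))) - (A * Φ) *ᵥ θ := by
    simp only [Matrix.mul_sub, Matrix.sub_mul, Matrix.mul_one, sub_mulVec, Matrix.mul_smul,
      Matrix.smul_mul, smul_mulVec, mulVec_mulVec, Matrix.mul_assoc]
  rw [sub_eq_zero, hProj, Matrix.mul_assoc _ Φᵀ, mul_inv_mul_mulVec_eq_iff hGram, hBellman,
    mulVec_add, mulVec_smul, eq_neg_iff_add_eq_zero, ← sub_eq_zero]
  constructor <;> intro h <;> rw [← h] <;> abel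

/-- For every `θ`, the projected Bellman equation `Π(R + γPΦθ) − Φθ = 0` holds iff
the linear equation `Φᵀ D (γP − I) Φ θ = −Φᵀ D R` holds. -/
theorem stmt_7 {S : Type*} [Fintype S] [DecidableEq S] [Nonempty S]
    (q : ℕ) (hq : 0 < q)
    (P : Matrix S S ℝ) (γ : ℝ) (R : S → ℝ)
    (d : S → ℝ) (hd : ∀ s, 0 < d s)
    (Φ : Matrix S (Fin q) ℝ) (hΦ : Φ.rank = q)
    (Proj : Matrix S S ℝ)
    (hProj : Proj = Φ * (Φᵀ * Matrix.diagonal d * Φ)⁻¹ * Φᵀ * Matrix.diagonal d) :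
    ∀ θ : Fin q → ℝ,
      Proj *ᵥ (R + γ • (P *ᵥ (Φ *ᵥ θ))) - Φ *ᵥ θ = 0 ↔
      (Φᵀ * Matrix.diagonal d * (γ • P - 1) * Φ) *ᵥ θ =
        -((Φᵀ * Matrix.diagonal d) *ᵥ R) :=
  stmt_7_general q P γ R d hd Φ hΦ Proj hProj
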